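/- Let D = ℝ² \ {(0, y) ∈ ℝ² : y ≥ 0} be the plane with a closed vertical ray removed, equipped with the subspace topology. There exists a continuous map F : [0,1] × ℝ² → ℝ² such that: (i) F(1, z) = z for all z ∈ ℝ²; (ii) the map z ↦ F(0, z) is a homeomorphism from ℝ² onto D (that is, it is injective with range exactly D, and it is a homeomorphism onto its image); and (iii) for every compact subset K of D, the preimage F⁻¹(K) is a compact subset of [0,1] × ℝ². -/
import Mathlib

open Set Topology

set_option maxHeartbeats 1000000

noncomputable section
namespace Stmt9Aux

/-- `q z = sqrt (x² + y² + 1)` -/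
def qq (z : ℝ × ℝ) : ℝ := Real.sqrt (z.1^2 + z.2^2 + 1)

/-- `m z = q z - y > 0`; this equals `‖h z‖`. -/
def mm (z : ℝ × ℝ) : ℝ := qq z - z.2

/-- the homeomorphism from the plane onto the slit plane -/
def hh (z : ℝ × ℝ) : ℝ × ℝ :=
  (2 * z.1 * (mm z)^2 / (z.1^2 + (mm z)^2),
   mm z * (z.1^2 - (mm z)^2) / (z.1^2 + (mm z)^2))

lemma qq_pos (z : ℝ × ℝ) : 0 < qq z :=
  Real.sqrt_pos.2 (by positivity)

lemma qq_sq (z : ℝ × ℝ) : (qq z)^2 = z.1^2 + z.2^2 + 1 :=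
  Real.sq_sqrt (by positivity)

lemma lt_qq (z : ℝ × ℝ) : z.2 < qq z := by
  have h1 := qq_pos z
  have h2 := qq_sq z
  nlinarith [sq_nonneg z.1, sq_nonneg (qq z - z.2), sq_nonneg (qq z + z.2)]

lemma mm_pos (z : ℝ × ℝ) : 0 < mm z := sub_pos.2 (lt_qq z)

lemma NN_pos (z : ℝ × ℝ) : 0 < z.1^2 + (mm z)^2 := by
  have := mm_pos z; positivity

lemma key_id (z : ℝ × ℝ) : mm z * (qq z + z.2) = z.1^2 + 1 := by
  have h2 := qq_sq z
  simp only [mm]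
  nlinarith [h2]

lemma hh_norm_sq (z : ℝ × ℝ) : (hh z).1^2 + (hh z).2^2 = (mm z)^2 := by
  have hN := NN_pos z
  simp only [hh]
  field_simp
  ring

lemma cont_qq : Continuous qq := by
  unfold qq; fun_prop

lemma cont_mm : Continuous mm := by
  unfold mm; exact cont_qq.sub continuous_snd

lemma cont_hh : Continuous hh := by
  have hm := cont_mm
  unfold hh
  refine Continuous.prodMk ?_ ?_ <;>
    exact Continuous.div (by fun_prop) (by fun_prop) (fun z => ne_of_gt (NN_pos z))


def dd (w : ℝ × ℝ) : ℝ := Real.sqrt (w.1^2 + w.2^2) - w.2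

lemma cont_dd : Continuous dd := by unfold dd; fun_prop

lemma charD (w : ℝ × ℝ) : (¬(w.1 = 0 ∧ 0 ≤ w.2)) ↔ 0 < dd w := by
  have hρ0 : 0 ≤ Real.sqrt (w.1^2 + w.2^2) := Real.sqrt_nonneg _
  have hρ2 : (Real.sqrt (w.1^2 + w.2^2))^2 = w.1^2 + w.2^2 := Real.sq_sqrt (by positivity)
  unfold dd
  constructor
  · intro hw
    by_cases h1 : w.1 = 0
    · have h2 : w.2 < 0 := by
        rcases lt_or_ge w.2 0 with h | h
        · exact h
        · exact absurd ⟨h1, h⟩ hw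
      linarith
    · have hx : 0 < w.1^2 := by positivity
      nlinarith [sq_nonneg (Real.sqrt (w.1^2 + w.2^2) - w.2)]
  · intro hdd ⟨h1, h2⟩
    have : Real.sqrt (w.1^2 + w.2^2) = w.2 := by
      rw [h1]
      simpa using Real.sqrt_sq h2
    linarith

def hi (w : ℝ × ℝ) : ℝ × ℝ :=
  (Real.sqrt (w.1^2 + w.2^2) * w.1 / (Real.sqrt (w.1^2 + w.2^2) - w.2),
   ((Real.sqrt (w.1^2 + w.2^2) * w.1 / (Real.sqrt (w.1^2 + w.2^2) - w.2))^2 + 1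
      - (Real.sqrt (w.1^2 + w.2^2))^2) / (2 * Real.sqrt (w.1^2 + w.2^2)))

lemma hh_mem (z : ℝ × ℝ) : 0 < dd (hh z) := by
  have hm := mm_pos z
  have hN := NN_pos z
  have hs : Real.sqrt ((hh z).1^2 + (hh z).2^2) = mm z := by
    rw [hh_norm_sq z]; exact Real.sqrt_sq hm.le
  have h2 : (hh z).2 < mm z := by
    show mm z * (z.1^2 - (mm z)^2) / (z.1^2 + (mm z)^2) < mm z
    rw [div_lt_iff₀ hN]
    nlinarith [pow_pos hm 3]
  unfold dd
  rw [hs]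
  linarith

lemma left_inv (z : ℝ × ℝ) : hi (hh z) = z := by
  obtain ⟨x, y⟩ := z
  have hm := mm_pos (x, y)
  have hN := NN_pos (x, y)
  set m := mm (x, y) with hmdef
  set N := x^2 + m^2 with hNdef
  have hNne : N ≠ 0 := ne_of_gt hN
  have hmne : m ≠ 0 := ne_of_gt hm
  have hq' : qq (x, y) = m + y := by rw [hmdef]; unfold mm; ring
  have hx2 : x^2 + 1 = m^2 + 2*m*y := by
    have h := key_id (x, y)
    rw [hq', ← hmdef] at h
    linear_combination -h
  have e1 : hh (x, y) = (2*x*m^2/N, m*(x^2 - m^2)/N) := rfl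
  have hnrm := hh_norm_sq (x, y)
  rw [e1] at hnrm
  simp only [Prod.fst, Prod.snd] at hnrm
  have hsq : Real.sqrt ((2*x*m^2/N)^2 + (m*(x^2 - m^2)/N)^2) = m := by
    rw [hnrm]; exact Real.sqrt_sq hm.le
  have hden : m - m*(x^2 - m^2)/N = 2*m^3/N := by
    field_simp
    ring
  have hdenne : (2:ℝ)*m^3/N ≠ 0 := by positivity
  have hA : m * (2*x*m^2/N) / (2*m^3/N) = x := by
    rw [div_eq_iff hdenne]
    field_simp
  rw [e1]
  unfold hi
  show (_, _) = _
  simp only [Prod.mk.injEq]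
  rw [hsq, hden, hA]
  have hB : (x^2 + 1 - m^2) / (2*m) = y := by
    rw [div_eq_iff (by positivity : (2:ℝ)*m ≠ 0)]
    linarith
  rw [hB]
  exact ⟨rfl, rfl⟩


lemma right_inv (w : ℝ × ℝ) (hw : 0 < dd w) : hh (hi w) = w := by
  obtain ⟨u, v⟩ := w
  set ρ := Real.sqrt (u^2 + v^2) with hρdef
  have hρ0 : 0 ≤ ρ := Real.sqrt_nonneg _
  have hρ2 : ρ^2 = u^2 + v^2 := Real.sq_sqrt (by positivity)
  have hs : 0 < ρ - v := hw
  have hρpos : 0 < ρ := by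
    by_contra h
    push_neg at h
    have hρeq : ρ = 0 := le_antisymm h hρ0
    rw [hρeq] at hρ2
    have hv : v = 0 := by nlinarith [sq_nonneg u, sq_nonneg v]
    rw [hρeq, hv] at hs
    linarith
  have hsne : ρ - v ≠ 0 := ne_of_gt hs
  have hρne : ρ ≠ 0 := ne_of_gt hρpos
  set x := ρ * u / (ρ - v) with hxdef
  set y := (x^2 + 1 - ρ^2) / (2*ρ) with hydef
  have e1 : hi (u, v) = (x, y) := rfl
  rw [e1]
  have hxs : x * (ρ - v) = ρ * u := by rw [hxdef]; field_simp
  have h2ρy : 2*ρ*y = x^2 + 1 - ρ^2 := by rw [hydef]; field_simp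
  have hq : qq (x, y) = y + ρ := by
    have hyρ : 0 ≤ y + ρ := by
      have e : y + ρ = (x^2 + 1 + ρ^2) / (2*ρ) := by
        rw [hydef]; field_simp; ring
      rw [e]; positivity
    have harg : x^2 + y^2 + 1 = (y + ρ)^2 := by linear_combination -h2ρy
    show Real.sqrt (x^2 + y^2 + 1) = y + ρ
    rw [harg]
    exact Real.sqrt_sq hyρ
  have hmρ : mm (x, y) = ρ := by unfold mm; rw [hq]; ring
  have hup : (0:ℝ) < x^2 + ρ^2 := by positivity
  have h1 : (x*(ρ-v))^2 = (ρ*u)^2 := by rw [hxs]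
  have hA2 : ((x^2 + ρ^2) * (ρ - v) - 2*ρ^3) * (ρ - v) = 0 := by
    linear_combination h1 - ρ^2 * hρ2
  have hA : (x^2 + ρ^2) * (ρ - v) = 2*ρ^3 := by
    rcases mul_eq_zero.mp hA2 with h | h
    · linarith
    · exact absurd h hsne
  have hB2' : ((x^2 - ρ^2) * (ρ - v) - 2*ρ^2*v) * (ρ - v) = 0 := by
    linear_combination h1 - ρ^2 * hρ2
  have hB2 : (x^2 - ρ^2) * (ρ - v) = 2*ρ^2*v := by
    rcases mul_eq_zero.mp hB2' with h | h
    · linarith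
    · exact absurd h hsne
  have e2 : hh (x, y) = (2*x*ρ^2/(x^2+ρ^2), ρ*(x^2-ρ^2)/(x^2+ρ^2)) := by
    unfold hh
    rw [hmρ]
  rw [e2]
  have G1 : 2*x*ρ^2/(x^2+ρ^2) = u := by
    rw [div_eq_iff (ne_of_gt hup)]
    have := mul_right_cancel₀ hsne (show (2*x*ρ^2) * (ρ-v) = (u*(x^2+ρ^2)) * (ρ-v) by
      linear_combination 2*ρ^2*hxs - u*hA)
    linarith [this]
  have G2 : ρ*(x^2-ρ^2)/(x^2+ρ^2) = v := by
    rw [div_eq_iff (ne_of_gt hup)]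
    have := mul_right_cancel₀ hsne (show (ρ*(x^2-ρ^2)) * (ρ-v) = (v*(x^2+ρ^2)) * (ρ-v) by
      linear_combination ρ*hB2 - v*hA)
    linarith [this]
  rw [G1, G2]


lemma P2aux (m y x : ℝ) (hm : 0 < m) (hq2 : (m+y)^2 = x^2 + y^2 + 1) :
    0 ≤ 2*x^2*m^2 + y*m*(x^2 - m^2) + 2*x^2 + 2*m^2 := by
  have hx2 : x^2 = m^2 + 2*m*y - 1 := by linear_combination -hq2
  have hxnn : 0 ≤ m^2 + 2*m*y - 1 := hx2 ▸ sq_nonneg x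
  have key2 : 2*x^2*m^2 + y*m*(x^2 - m^2) + 2*x^2 + 2*m^2
      = (2*m^2*x^2 + 2*(m*y)^2 + 3*(m*y) + 4*m^2 - 2)
        + (m*y + 2) * (x^2 - (m^2 + 2*m*y - 1)) := by ring
  rw [key2, hx2]
  ring_nf
  rcases le_or_gt 1 (m^2) with hm2 | hm2
  · nlinarith [sq_nonneg (4*(m*y)+3), mul_nonneg (sq_nonneg m) hxnn]
  · have hs : (1-m^2)/2 ≤ m*y := by linarith
    have hc : 0 ≤ (1-m^2)/2 := by linarith
    have hB : 0 ≤ 2*(m*y + (1-m^2)/2) + 3 := by linarith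
    nlinarith [mul_nonneg (sub_nonneg.2 hs) hB, mul_nonneg (sq_nonneg m) hxnn, sq_nonneg (m^2), sq_nonneg m]


lemma abs_le_of_sq (a b : ℝ) (hb : 0 ≤ b) (h : a^2 ≤ b^2) : |a| ≤ b := by
  rw [← Real.sqrt_sq_eq_abs, ← Real.sqrt_sq hb]
  exact Real.sqrt_le_sqrt h

lemma sqrt_le_abs_add (a b : ℝ) : Real.sqrt (a^2 + b^2) ≤ |a| + |b| := by
  rw [← Real.sqrt_sq (by positivity : (0:ℝ) ≤ |a| + |b|)]
  apply Real.sqrt_le_sqrt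
  nlinarith [sq_abs a, sq_abs b, mul_nonneg (abs_nonneg a) (abs_nonneg b)]

lemma mini_hE (M t x y m h1 h2 : ℝ) (ht0 : 0 ≤ t) (ht1 : t ≤ 1)
    (hw1sq : (t*x + (1-t)*h1)^2 ≤ M^2) (hw2sq : (t*y + (1-t)*h2)^2 ≤ M^2)
    (hnormsq : h1^2 + h2^2 = m^2) (hinner : -2 ≤ x*h1 + y*h2) :
    t^2*(x^2+y^2) + (1-t)^2*m^2 ≤ 2*M^2 + 1 := by
  nlinarith [hw1sq, hw2sq, hnormsq, sq_nonneg (2*t - 1),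
    mul_nonneg (mul_nonneg ht0 (sub_nonneg.2 ht1)) (by linarith : (0:ℝ) ≤ x*h1 + y*h2 + 2)]

lemma mini_half (M t x y m : ℝ) (hM : 1 ≤ M) (htc : 1/2 ≤ t) (ht1 : t ≤ 1)
    (hE : t^2*(x^2+y^2) + (1-t)^2*m^2 ≤ 2*M^2 + 1) :
    x^2 + y^2 ≤ 64*M^2 := by
  nlinarith [mul_nonneg (sq_nonneg (1-t)) (sq_nonneg m),
    mul_nonneg (by nlinarith : (0:ℝ) ≤ t^2 - 1/4) (by positivity : (0:ℝ) ≤ x^2+y^2)]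

lemma mini_hmM (M t x y m : ℝ) (hM : 1 ≤ M) (hm : 0 < m) (ht0 : 0 ≤ t) (htc : t < 1/2)
    (hE : t^2*(x^2+y^2) + (1-t)^2*m^2 ≤ 2*M^2 + 1) :
    m ≤ 4*M := by
  have h2' : m^2 ≤ 8*M^2 + 4 := by
    nlinarith [mul_nonneg (by nlinarith : (0:ℝ) ≤ (1-t)^2 - 1/4) (sq_nonneg m),
      mul_nonneg (sq_nonneg t) (by positivity : (0:ℝ) ≤ x^2+y^2)]
  nlinarith [hm, (by linarith : (0:ℝ) < M)]

lemma mini_hy (M x y m : ℝ) (hM : 1 ≤ M) (hm : 0 < m) (hmM : m ≤ 4*M)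
    (hxid : m*(m + 2*y) = x^2 + 1) (hy' : y ≤ 0) :
    x^2 + y^2 ≤ 64*M^2 := by
  have hxm : x^2 + 1 ≤ m^2 := by nlinarith [mul_nonneg hm.le (neg_nonneg.2 hy')]
  have h2my : 2*m*y = x^2 + 1 - m^2 := by linarith
  have hsq4 : 4*m^2*y^2 = (x^2+1-m^2)^2 := by linear_combination (2*m*y + x^2+1-m^2)*h2my
  have hy2 : 4*m^2*y^2 ≤ m^4 := by nlinarith [sq_nonneg x, hxm]
  have hm2 : m^2 ≤ 16*M^2 := by nlinarith [(by linarith : (0:ℝ) < M)]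
  have hy2' : y^2 ≤ 4*M^2 := by
    nlinarith [hy2, mul_pos hm hm, mul_nonneg (mul_pos hm hm).le (by linarith : (0:ℝ) ≤ 16*M^2 - m^2)]
  have hx2' : x^2 ≤ 16*M^2 := by nlinarith [hxm, hmM, hm, (by linarith : (0:ℝ) < M)]
  nlinarith [(by linarith : (0:ℝ) < M)]

lemma mini_hta (M ε t x y m R : ℝ) (hM : 1 ≤ M) (hε : 0 < ε) (ht0 : 0 ≤ t) (ht1 : t ≤ 1)
    (hm : 0 < m) (hy : 0 < y) (hmM : m ≤ 4*M) (hRpos : 0 < R) (hqR : R < m + y)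
    (hxid : m*(m + 2*y) = x^2 + 1) (hR2 : 2048*M^3 ≤ R*ε^2)
    (hE : t^2*(x^2+y^2) + (1-t)^2*m^2 ≤ 2*M^2 + 1) :
    (t*x)^2 ≤ ε^2/64 := by
  have hM0 : (0:ℝ) < M := by linarith
  have hε2 : (0:ℝ) < ε^2 := by positivity
  have aM3 : (0:ℝ) < M^3 := by positivity
  have hmy : 0 < m + y := by linarith
  have s1 : t^2*(m+y)^2 ≤ 4*M^2 := by
    have e : (m+y)^2 = x^2 + y^2 + 1 := by linear_combination hxid
    have ht2 : t^2 ≤ 1 := by nlinarith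
    rw [e]
    nlinarith [hE, mul_nonneg (sq_nonneg (1-t)) (sq_nonneg m), sq_nonneg t, hM]
  have s2 : t^2*(m+y)*R ≤ 4*M^2 := by
    nlinarith [mul_nonneg (sub_nonneg.2 hqR.le) (mul_nonneg (sq_nonneg t) hmy.le)]
  have s3 : t^2*x^2 ≤ 8*M*(t^2*(m+y)) := by
    have hb : m*(m+2*y) ≤ 8*M*(m+y) := by nlinarith [hmM, hm, hy]
    nlinarith [mul_nonneg (sq_nonneg t) (by nlinarith : (0:ℝ) ≤ 8*M*(m+y) - m*(m+2*y))]
  have k1 : t^2*x^2*R ≤ 32*M^3 := by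
    have w1 : t^2*x^2*R ≤ 8*M*(t^2*(m+y))*R := mul_le_mul_of_nonneg_right s3 hRpos.le
    nlinarith [w1, s2, hM0]
  have u1 : t^2*x^2*(R*ε^2) ≤ 32*M^3*ε^2 := by nlinarith [mul_le_mul_of_nonneg_right k1 hε2.le]
  have u2 : (2048*M^3)*(t^2*x^2) ≤ t^2*x^2*(R*ε^2) := by
    nlinarith [mul_nonneg (mul_nonneg (sq_nonneg t) (sq_nonneg x)) (sub_nonneg.2 hR2)]
  nlinarith [aM3, u1, u2, mul_nonneg (sq_nonneg t) (sq_nonneg x)]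

lemma mini_hb1 (M ε x y m h1 R X : ℝ) (hM : 1 ≤ M) (hε : 0 < ε)
    (hm : 0 < m) (hy : 0 < y) (hmM : m ≤ 4*M) (hqR : R < m + y)
    (hxid : m*(m + 2*y) = x^2 + 1)
    (hd1 : h1*(x^2+m^2) = 2*x*m^2) (hnorm1 : h1^2 ≤ m^2)
    (hX : X*ε^2 = 16384*M^4) (hR3 : X + 1 ≤ R*ε/8) :
    |h1| ≤ ε/4 := by
  have hM0 : (0:ℝ) < M := by linarith
  have hε2 : (0:ℝ) < ε^2 := by positivity
  have aM4 : (0:ℝ) < M^4 := by positivity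
  have hmy : 0 < m + y := by linarith
  rcases le_or_gt m (ε/8) with hm8 | hm8
  · have : |h1| ≤ m := abs_le_of_sq _ _ hm.le hnorm1
    linarith
  · have hmq : m*(m+y) ≤ x^2 + 1 := by nlinarith [mul_nonneg hm.le hy.le]
    have hx2R : R*ε/8 ≤ x^2 + 1 := by nlinarith [hε, hmy]
    have hx2big : X ≤ x^2 := by linarith
    have v1 : h1^2*(x^2+m^2)^2 = 4*x^2*m^4 := by
      linear_combination (h1*(x^2+m^2) + 2*x*m^2) * hd1
    have v2 : h1^2*x^2 ≤ 4*m^4 := by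
      nlinarith [v1, mul_nonneg (sq_nonneg h1) (mul_nonneg (sq_nonneg m)
        (by positivity : (0:ℝ) ≤ x^2 + (x^2+m^2))), sq_nonneg (h1*m), sq_nonneg h1, sq_nonneg x]
    have hm2' : m^2 ≤ 16*M^2 := by nlinarith [hm, hM0]
    have v3 : 4*m^4 ≤ 1024*M^4 := by
      nlinarith [mul_nonneg (sub_nonneg.2 hm2') (by positivity : (0:ℝ) ≤ 16*M^2 + m^2)]
    have u3 : h1^2*X ≤ 1024*M^4 := by
      nlinarith [mul_nonneg (sq_nonneg h1) (sub_nonneg.2 hx2big), v2, v3]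
    have u4 : h1^2*X*ε^2 ≤ 1024*M^4*ε^2 := by
      nlinarith [mul_le_mul_of_nonneg_right u3 hε2.le]
    have u5 : h1^2*(16384*M^4) ≤ 1024*M^4*ε^2 := by
      nlinarith [u4, hX, sq_nonneg h1]
    have v4 : h1^2 ≤ ε^2/16 := by nlinarith [aM4, u5]
    exact abs_le_of_sq _ _ (by positivity) (by nlinarith [v4])

lemma mini_hc (M ε x y m h2 R E4 : ℝ) (hM : 1 ≤ M) (hε : 0 < ε)
    (hm : 0 < m) (hy : 0 < y) (hmM : m ≤ 4*M) (hqR : R < m + y)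
    (hxid : m*(m + 2*y) = x^2 + 1)
    (hd2 : h2*(x^2+m^2) = m*(x^2 - m^2)) (hnorm2 : h2^2 ≤ m^2)
    (hE4 : E4*ε = 4) (hE40 : 0 ≤ E4) (hR8M : 8*M + E4 ≤ R) :
    -(ε/4) ≤ h2 := by
  have hM0 : (0:ℝ) < M := by linarith
  have hN : (0:ℝ) < x^2 + m^2 := by positivity
  rcases le_or_gt m (ε/4) with hm4 | hm4
  · have : |h2| ≤ m := abs_le_of_sq _ _ hm.le hnorm2
    have := abs_le.mp this
    linarith [this.1]
  · rcases le_or_gt (m^2) (x^2) with hx2m | hx2m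
    · -- h2 ≥ 0
      have hnum : 0 ≤ m*(x^2 - m^2) := mul_nonneg hm.le (by linarith)
      nlinarith [hd2, hN, hε]
    · exfalso
      have hmq : m*(m+y) ≤ x^2 + 1 := by nlinarith [mul_nonneg hm.le hy.le]
      have hRb : 8*M + E4 < m + y := by linarith
      nlinarith [mul_lt_mul_of_pos_left hRb hm, hmM,
        mul_le_mul_of_nonneg_right hm4.le hE40, hE4, hε, hx2m]


lemma mini_final (eps t x y h1 h2 : ℝ) (heps : 0 < eps) (ht0 : 0 ≤ t) (ht1 : t ≤ 1)
    (hy : 0 < y)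
    (hta : (t*x)^2 ≤ eps^2/64) (hb1 : |h1| ≤ eps/4) (hc : -(eps/4) ≤ h2)
    (hdel : eps ≤ Real.sqrt ((t*x + (1-t)*h1)^2 + (t*y + (1-t)*h2)^2) - (t*y + (1-t)*h2)) :
    False := by
  have hty : 0 ≤ t*y := mul_nonneg ht0 hy.le
  have hw2lb : -(eps/4) ≤ t*y + (1-t)*h2 := by
    rcases le_or_gt 0 h2 with h | h
    · nlinarith [mul_nonneg (sub_nonneg.2 ht1) h]
    · nlinarith [mul_nonneg ht0 (neg_nonneg.2 h.le)]
  have htx : |t*x| ≤ eps/8 := abs_le_of_sq _ _ (by positivity) (by nlinarith [hta])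
  have hw1b : |t*x + (1-t)*h1| ≤ 3*eps/8 := by
    calc |t*x + (1-t)*h1| ≤ |t*x| + |(1-t)*h1| := abs_add_le _ _
      _ ≤ eps/8 + (1-t)*|h1| := by
          rw [abs_mul (1-t) h1, abs_of_nonneg (by linarith : (0:ℝ) ≤ 1-t)]
          linarith
      _ ≤ 3*eps/8 := by
          have h1t : (1-t)*|h1| ≤ 1*(eps/4) :=
            mul_le_mul (by linarith) hb1 (abs_nonneg _) (by norm_num)
          linarith
  have hs := sqrt_le_abs_add (t*x + (1-t)*h1) (t*y + (1-t)*h2)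
  have habs := abs_le.mp hw1b
  rcases le_or_gt 0 (t*y + (1-t)*h2) with h | h
  · rw [abs_of_nonneg h] at hs
    nlinarith [hdel, hs, habs.1, habs.2, heps]
  · rw [abs_of_neg h] at hs
    nlinarith [hdel, hs, habs.1, habs.2, hw2lb, heps]


lemma key_alg (M ε t x y m h1 h2 R X E4 : ℝ)
    (hM : 1 ≤ M) (hε : 0 < ε) (ht0 : 0 ≤ t) (ht1 : t ≤ 1)
    (hm : 0 < m) (hq2 : (m+y)^2 = x^2 + y^2 + 1)
    (hd1 : h1*(x^2+m^2) = 2*x*m^2) (hd2 : h2*(x^2+m^2) = m*(x^2 - m^2))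
    (hnormsq : h1^2 + h2^2 = m^2) (hinner : -2 ≤ x*h1 + y*h2)
    (hRpos : 0 < R) (hR8M : 8*M + E4 ≤ R)
    (hR2 : 2048*M^3 ≤ R*ε^2)
    (hX : X*ε^2 = 16384*M^4) (hR3 : X + 1 ≤ R*ε/8)
    (hE4 : E4*ε = 4) (hE40 : 0 ≤ E4)
    (hw1sq : (t*x + (1-t)*h1)^2 ≤ M^2) (hw2sq : (t*y + (1-t)*h2)^2 ≤ M^2)
    (hδ : ε ≤ Real.sqrt ((t*x + (1-t)*h1)^2 + (t*y + (1-t)*h2)^2) - (t*y + (1-t)*h2)) :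
    x^2 + y^2 ≤ R^2 := by
  have hM0 : (0:ℝ) < M := lt_of_lt_of_le one_pos hM
  have hxid : m*(m + 2*y) = x^2 + 1 := by linear_combination hq2
  have hE := mini_hE M t x y m h1 h2 ht0 ht1 hw1sq hw2sq hnormsq hinner
  have hnorm1 : h1^2 ≤ m^2 := by nlinarith [sq_nonneg h2, hnormsq]
  have hnorm2 : h2^2 ≤ m^2 := by nlinarith [sq_nonneg h1, hnormsq]
  clear hw1sq hw2sq hnormsq hinner
  have h8R : 8*M ≤ R := by linarith
  have h64 : 64*M^2 ≤ R^2 := by nlinarith [mul_le_mul h8R h8R (by linarith) (by linarith)]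
  rcases le_or_gt (1/2 : ℝ) t with htc | htc
  · linarith [mini_half M t x y m hM htc ht1 hE]
  have hmM := mini_hmM M t x y m hM hm ht0 htc hE
  by_contra hcon
  push_neg at hcon
  have hy : 0 < y := by
    by_contra hy'
    push_neg at hy'
    have := mini_hy M x y m hM hm hmM hxid hy'
    linarith
  have hmy : 0 < m + y := by linarith
  have hqR : R < m + y := by nlinarith [hq2, hcon, hRpos, hmy]
  have hta := mini_hta M ε t x y m R hM hε ht0 ht1 hm hy hmM hRpos hqR hxid hR2 hE
  have hb1 := mini_hb1 M ε x y m h1 R X hM hε hm hy hmM hqR hxid hd1 hnorm1 hX hR3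
  have hc := mini_hc M ε x y m h2 R E4 hM hε hm hy hmM hqR hxid hd2 hnorm2 hE4 hE40 hR8M
  exact mini_final ε t x y h1 h2 hε ht0 ht1 hy hta hb1 hc hδ


lemma hi_contAt (w : ℝ × ℝ) (hw : 0 < dd w) : ContinuousAt hi w := by
  have hsc : Continuous fun w : ℝ × ℝ => Real.sqrt (w.1^2 + w.2^2) := by fun_prop
  have hρv : Real.sqrt (w.1^2 + w.2^2) - w.2 ≠ 0 := ne_of_gt hw
  have hρabs : |w.2| ≤ Real.sqrt (w.1^2 + w.2^2) := by
    rw [← Real.sqrt_sq_eq_abs]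
    exact Real.sqrt_le_sqrt (by nlinarith [sq_nonneg w.1])
  have hρpos : 0 < Real.sqrt (w.1^2 + w.2^2) := by
    have h1 := neg_abs_le w.2
    have h2 : 0 < Real.sqrt (w.1^2 + w.2^2) - w.2 := hw
    linarith
  have hA : ContinuousAt (fun w : ℝ × ℝ =>
      Real.sqrt (w.1^2 + w.2^2) * w.1 / (Real.sqrt (w.1^2 + w.2^2) - w.2)) w :=
    ContinuousAt.div (hsc.continuousAt.mul continuousAt_fst)
      (hsc.continuousAt.sub continuousAt_snd) hρv
  unfold hi
  apply ContinuousAt.prodMk hA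
  apply ContinuousAt.div
  · exact ((hA.pow 2).add continuousAt_const).sub (hsc.continuousAt.pow 2)
  · exact continuousAt_const.mul hsc.continuousAt
  · exact ne_of_gt (by linarith)

lemma hh_injective : Function.Injective hh := by
  intro a b hab
  have := congrArg hi hab
  rwa [left_inv, left_inv] at this

lemma hh_embedding : Topology.IsEmbedding hh := by
  apply Topology.IsEmbedding.mk' _ hh_injective
  intro z
  apply le_antisymm
  · have hca : ContinuousAt hi (hh z) := hi_contAt _ (hh_mem z)
    have ht : Filter.Tendsto hi (𝓝 (hh z)) (𝓝 z) := by
      have := hca.tendsto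
      rwa [left_inv] at this
    calc Filter.comap hh (𝓝 (hh z))
        ≤ Filter.comap hh (Filter.comap hi (𝓝 z)) := Filter.comap_mono ht.le_comap
      _ = Filter.comap (hi ∘ hh) (𝓝 z) := Filter.comap_comap
      _ = 𝓝 z := by rw [show hi ∘ hh = id from funext left_inv, Filter.comap_id]
  · exact (cont_hh.tendsto z).le_comap

lemma range_hh : range hh = {w : ℝ × ℝ | 0 < dd w} := by
  ext w
  constructor
  · rintro ⟨z, rfl⟩
    exact hh_mem z
  · intro hw
    exact ⟨hi w, right_inv w hw⟩


/-- the radius bound for the properness argument -/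
def RR (M ε : ℝ) : ℝ := 8*M + 4/ε + 2048*M^3/ε^2 + (8/ε)*(16384*M^4/ε^2 + 1) + 1

lemma key' (M ε t : ℝ) (z : ℝ × ℝ) (hM : 1 ≤ M) (hε : 0 < ε) (ht0 : 0 ≤ t) (ht1 : t ≤ 1)
    (hw1 : |t * z.1 + (1-t) * (hh z).1| ≤ M) (hw2 : |t * z.2 + (1-t) * (hh z).2| ≤ M)
    (hδ : ε ≤ dd (t * z.1 + (1-t) * (hh z).1, t * z.2 + (1-t) * (hh z).2)) :
    z.1^2 + z.2^2 ≤ (RR M ε)^2 := by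
  obtain ⟨x, y⟩ := z
  have hM0 : (0:ℝ) < M := lt_of_lt_of_le one_pos hM
  have hε2 : (0:ℝ) < ε^2 := by positivity
  have hεne : ε ≠ 0 := ne_of_gt hε
  have hε2ne : ε^2 ≠ 0 := ne_of_gt hε2
  set X := 16384*M^4/ε^2 with hXdef
  set E4 := 4/ε with hE4def
  set R := RR M ε with hRdef
  have hX : X*ε^2 = 16384*M^4 := div_mul_cancel₀ _ hε2ne
  have hE4 : E4*ε = 4 := div_mul_cancel₀ _ hεne
  have hX0 : 0 ≤ X := by rw [hXdef]; positivity
  have hE40 : 0 ≤ E4 := by rw [hE4def]; positivity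
  have hS3 : (0:ℝ) ≤ 2048*M^3/ε^2 := by positivity
  have hS4 : (0:ℝ) ≤ (8/ε)*(X + 1) := by positivity
  have hRR : R = 8*M + E4 + 2048*M^3/ε^2 + (8/ε)*(X + 1) + 1 := by
    rw [hRdef, hE4def, hXdef]; rfl
  have hRpos : 0 < R := by rw [hRR]; linarith
  have hR8M : 8*M + E4 ≤ R := by rw [hRR]; linarith
  have hR2 : 2048*M^3 ≤ R*ε^2 := by
    have e : (2048*M^3/ε^2)*ε^2 = 2048*M^3 := div_mul_cancel₀ _ hε2ne
    have hge : 2048*M^3/ε^2 ≤ R := by rw [hRR]; linarith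
    have := mul_le_mul_of_nonneg_right hge hε2.le
    linarith
  have hR3 : X + 1 ≤ R*ε/8 := by
    have e : ((8/ε)*(X + 1))*ε/8 = X + 1 := by field_simp
    have hge : (8/ε)*(X + 1) ≤ R := by rw [hRR]; linarith
    calc X + 1 = ((8/ε)*(X + 1))*ε/8 := e.symm
      _ ≤ R*ε/8 := by
          apply div_le_div_of_nonneg_right ?_ (by norm_num)
          exact mul_le_mul_of_nonneg_right hge hε.le
  -- the algebraic data of hh
  have hm := mm_pos (x, y)
  set m := mm (x, y) with hmdef
  have hN := NN_pos (x, y)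
  have hq' : qq (x, y) = m + y := by rw [hmdef]; unfold mm; ring
  have hq2 : (m + y)^2 = x^2 + y^2 + 1 := by rw [← hq']; exact qq_sq (x, y)
  have e1 : hh (x, y) = (2*x*m^2/(x^2+m^2), m*(x^2 - m^2)/(x^2+m^2)) := rfl
  rw [e1] at hw1 hw2 hδ
  obtain ⟨h1, hh1⟩ : ∃ a : ℝ, a = 2*x*m^2/(x^2+m^2) := ⟨_, rfl⟩
  obtain ⟨h2, hh2⟩ : ∃ a : ℝ, a = m*(x^2 - m^2)/(x^2+m^2) := ⟨_, rfl⟩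
  rw [← hh1, ← hh2] at hw1 hw2 hδ
  have hNne : (x^2+m^2) ≠ 0 := ne_of_gt hN
  have hd1 : h1*(x^2+m^2) = 2*x*m^2 := by rw [hh1]; field_simp
  have hd2 : h2*(x^2+m^2) = m*(x^2 - m^2) := by rw [hh2]; field_simp
  have hnormsq : h1^2 + h2^2 = m^2 := by
    have h := hh_norm_sq (x, y)
    rw [e1] at h
    rw [hh1, hh2]
    exact h
  have hinner : -2 ≤ x*h1 + y*h2 := by
    have hP := P2aux m y x hm hq2
    have e : x*h1 + y*h2 = (2*x^2*m^2 + y*m*(x^2 - m^2))/(x^2+m^2) := by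
      rw [hh1, hh2]; field_simp
    rw [e, le_div_iff₀ hN]
    nlinarith [hP]
  have hw1sq : (t*x + (1-t)*h1)^2 ≤ M^2 := by
    nlinarith [sq_abs (t*x + (1-t)*h1), abs_nonneg (t*x + (1-t)*h1), hw1, hM0]
  have hw2sq : (t*y + (1-t)*h2)^2 ≤ M^2 := by
    nlinarith [sq_abs (t*y + (1-t)*h2), abs_nonneg (t*y + (1-t)*h2), hw2, hM0]
  have hδ' : ε ≤ Real.sqrt ((t*x + (1-t)*h1)^2 + (t*y + (1-t)*h2)^2) - (t*y + (1-t)*h2) := hδ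
  exact key_alg M ε t x y m h1 h2 R X E4 hM hε ht0 ht1 hm hq2 hd1 hd2 hnormsq hinner
    hRpos hR8M hR2 hX hR3 hE4 hE40 hw1sq hw2sq hδ'


def FF (p : ↥(Icc (0:ℝ) 1) × ℝ × ℝ) : ℝ × ℝ :=
  ((p.1:ℝ) * p.2.1 + (1 - (p.1:ℝ)) * (hh p.2).1,
   (p.1:ℝ) * p.2.2 + (1 - (p.1:ℝ)) * (hh p.2).2)

lemma cont_FF : Continuous FF := by
  have c0 : Continuous fun p : ↥(Icc (0:ℝ) 1) × ℝ × ℝ => ((p.1:ℝ)) :=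
    continuous_subtype_val.comp continuous_fst
  have ch : Continuous fun p : ↥(Icc (0:ℝ) 1) × ℝ × ℝ => hh p.2 := cont_hh.comp continuous_snd
  unfold FF
  exact ((c0.mul (continuous_snd.fst)).add ((continuous_const.sub c0).mul ch.fst)).prodMk
        ((c0.mul (continuous_snd.snd)).add ((continuous_const.sub c0).mul ch.snd))

lemma FF_one (h : (1:ℝ) ∈ Icc (0:ℝ) 1) (z : ℝ × ℝ) : FF (⟨1, h⟩, z) = z := by
  simp [FF]

lemma FF_zero (h : (0:ℝ) ∈ Icc (0:ℝ) 1) : (fun z => FF (⟨0, h⟩, z)) = hh := by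
  funext z
  simp [FF]

lemma RR_pos (M ε : ℝ) (hM : 1 ≤ M) (hε : 0 < ε) : 0 < RR M ε := by
  have h1 : (0:ℝ) < 4/ε := by positivity
  have h2 : (0:ℝ) ≤ 2048*M^3/ε^2 := by positivity
  have h3 : (0:ℝ) ≤ (8/ε)*(16384*M^4/ε^2 + 1) := by positivity
  unfold RR
  nlinarith

end Stmt9Aux

open Stmt9Aux

theorem stmt_9 (D : Set (ℝ × ℝ)) (hD : D = {p : ℝ × ℝ | ¬(p.1 = 0 ∧ 0 ≤ p.2)}) :
    ∃ F : Icc (0:ℝ) 1 × (ℝ × ℝ) → ℝ × ℝ,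
      Continuous F ∧
      (∀ z : ℝ × ℝ, F (⟨1, by norm_num⟩, z) = z) ∧
      Function.Injective (fun z : ℝ × ℝ => F (⟨0, by norm_num⟩, z)) ∧
      Set.range (fun z : ℝ × ℝ => F (⟨0, by norm_num⟩, z)) = D ∧
      Topology.IsEmbedding (fun z : ℝ × ℝ => F (⟨0, by norm_num⟩, z)) ∧
      ∀ K ⊆ D, IsCompact K → IsCompact (F ⁻¹' K) := by
  refine ⟨FF, cont_FF, FF_one _, ?_, ?_, ?_, ?_⟩
  · rw [FF_zero]
    exact hh_injective
  · rw [FF_zero, range_hh, hD]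
    ext w
    exact (charD w).symm
  · rw [FF_zero]
    exact hh_embedding
  · intro K hKD hK
    rcases K.eq_empty_or_nonempty with rfl | hne
    · simp only [Set.preimage_empty]
      exact isCompact_empty
    obtain ⟨M₀, hM₀⟩ := hK.isBounded.subset_closedBall 0
    set M := max M₀ 1 with hMdef
    have hM1 : (1:ℝ) ≤ M := le_max_right _ _
    have hKM : ∀ w ∈ K, |w.1| ≤ M ∧ |w.2| ≤ M := by
      intro w hw
      have hball := hM₀ hw
      rw [Metric.mem_closedBall, dist_zero_right] at hball
      have h1 : ‖w.1‖ ≤ ‖w‖ := norm_fst_le w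
      have h2 : ‖w.2‖ ≤ ‖w‖ := norm_snd_le w
      have hMM : M₀ ≤ M := le_max_left _ _
      rw [Real.norm_eq_abs] at h1 h2
      exact ⟨by linarith, by linarith⟩
    obtain ⟨w₀, hw₀K, hw₀min⟩ := hK.exists_isMinOn hne cont_dd.continuousOn
    set ε := dd w₀ with hεdef
    have hε : 0 < ε := by
      have hmem := hKD hw₀K
      rw [hD] at hmem
      exact (charD w₀).mp hmem
    have hcomp : IsCompact ((univ : Set ↥(Icc (0:ℝ) 1)) ×ˢ Metric.closedBall (0 : ℝ×ℝ) (RR M ε)) := by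
      haveI : CompactSpace ↥(Icc (0:ℝ) 1) :=
        isCompact_iff_compactSpace.mp (isCompact_Icc (a := (0:ℝ)) (b := 1))
      exact isCompact_univ.prod (isCompact_closedBall _ _)
    apply hcomp.of_isClosed_subset (hK.isClosed.preimage cont_FF)
    intro p hp
    have hb := hKM _ hp
    have hmin : ε ≤ dd (FF p) := (isMinOn_iff.mp hw₀min) _ hp
    have ht01 := p.1.2
    have hkey : p.2.1^2 + p.2.2^2 ≤ (RR M ε)^2 :=
      key' M ε (p.1 : ℝ) p.2 hM1 hε ht01.1 ht01.2 hb.1 hb.2 hmin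
    have hR0 : 0 ≤ RR M ε := (RR_pos M ε hM1 hε).le
    constructor
    · trivial
    · rw [Metric.mem_closedBall, dist_zero_right, Prod.norm_def]
      apply max_le
      · rw [Real.norm_eq_abs]
        exact abs_le_of_sq _ _ hR0 (by nlinarith [hkey, sq_nonneg p.2.2])
      · rw [Real.norm_eq_abs]
        exact abs_le_of_sq _ _ hR0 (by nlinarith [hkey, sq_nonneg p.2.1])
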